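/- Let k ≥ 2, 0 < ρ < 1, and let η_0, η_1, …, η_k be probability distributions on a finite sample space Ω_η with η_0(y) > 0 for all y ∈ Ω_η and |η_i(y)/η_0(y) − 1| ≤ ρ for all y ∈ Ω_η and all i ∈ [k]. Then there exist a finite sample space Ω_μ ⊆ {−1,1}^k, a BCD(ρ) family {μ_1,…,μ_k} on Ω_μ centered around a distribution μ_0, and a channel Q assigning to each x ∈ Ω_μ a probability distribution Q(·|x) on Ω_η, such that: (a) for every i ∈ [k] and y ∈ Ω_η, η_i(y) = ∑_{x∈Ω_μ} μ_i(x)·Q(y|x); and (b) for every S ⊆ [k], E_{X∼μ_0}[∏_{i∈S}(μ_i(X)/μ_0(X) − 1)] = E_{Y∼η_0}[∏_{i∈S}(η_i(Y)/η_0(Y) − 1)]. -/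

import Mathlib

/-!
Normalise the deviations to `ε_i(y) = (η_i(y)/η₀(y) - 1)/ρ ∈ [-1, 1]` and couple `Y ∼ η₀` with a
sign vector `X ∈ {±1}^k` whose coordinates are, given `Y = y`, independent with means `ε_i(y)`.
Then `μ₀` is the law of `X` and `Q` the conditional law of `Y` given `X`. Conditionally on `Y`,
`E[∏_{i∈S} X_i | Y] = ∏_{i∈S} ε_i(Y)`; this single identity gives the centering of `μ₀`
(`S = {i}`, as `E_{η₀}[ε_i] = 0`), the marginals `η_i` (since `μ_i/μ₀ = 1 + ρ X_i`), and the
equality of all correlations, both sides being `ρ^|S| E[∏_{i∈S} ε_i(Y)]`.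
-/

open Finset

noncomputable section

/-- `p` is a probability distribution on the finite set `Ω`. -/
def IsDist {Ω : Type*} [Fintype Ω] (p : Ω → ℝ) : Prop :=
  (∀ x, 0 ≤ p x) ∧ ∑ x, p x = 1

section SignCube

variable {ι : Type*} [Fintype ι] [DecidableEq ι]

variable (ι) in
def signCube : Finset (ι → ℝ) :=
  Fintype.piFinset fun _ => {1, -1}

lemma mem_signCube {x : ι → ℝ} : x ∈ signCube ι ↔ ∀ i, x i = 1 ∨ x i = -1 := by
  simp [signCube]

lemma sum_signCube_prod (g : ι → ℝ → ℝ) :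
    ∑ x ∈ signCube ι, ∏ j, g j (x j) = ∏ j, (g j 1 + g j (-1)) := by
  rw [signCube, ← prod_univ_sum]
  exact prod_congr rfl fun j _ => sum_pair (by norm_num)

/-- The product distribution on `{±1}^ι` whose `j`-th coordinate has mean `e j`. -/
def signWeight (e : ι → ℝ) (x : ι → ℝ) : ℝ :=
  ∏ j, (1 + x j * e j) / 2

lemma signWeight_nonneg {e x : ι → ℝ} (he : ∀ j, |e j| ≤ 1) (hx : x ∈ signCube ι) :
    0 ≤ signWeight e x := by
  refine prod_nonneg fun j _ => div_nonneg ?_ zero_le_two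
  have := abs_le.1 (he j)
  rcases mem_signCube.1 hx j with h | h <;> rw [h] <;> linarith

lemma sum_signCube_prod_mul_signWeight (e : ι → ℝ) (S : Finset ι) :
    ∑ x ∈ signCube ι, (∏ i ∈ S, x i) * signWeight e x = ∏ i ∈ S, e i := by
  have hfactor : ∀ x : ι → ℝ, (∏ i ∈ S, x i) * signWeight e x
      = ∏ j, (if j ∈ S then x j else 1) * ((1 + x j * e j) / 2) := by
    intro x
    rw [prod_mul_distrib, Fintype.prod_ite_mem, signWeight]
  simp only [hfactor]
  rw [sum_signCube_prod fun j t => (if j ∈ S then t else 1) * ((1 + t * e j) / 2),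
    ← Fintype.prod_ite_mem S]
  refine prod_congr rfl fun j _ => ?_
  split_ifs <;> ring

end SignCube

section ConditionalDistribution

variable {α β : Type*} [Fintype β]

/-- The conditional distribution of `y` given `x` under the joint weight `w`, with the default
`ν` where the marginal weight of `x` vanishes. -/
def condDist (w : α → β → ℝ) (ν : β → ℝ) (x : α) (y : β) : ℝ :=
  if ∑ y', w x y' = 0 then ν y else w x y / ∑ y', w x y'

variable {w : α → β → ℝ} {x : α}

lemma sum_mul_condDist (hw : ∀ y, 0 ≤ w x y) (ν : β → ℝ) (y : β) :
    (∑ y', w x y') * condDist w ν x y = w x y := by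
  rw [condDist]
  split_ifs with h
  · rw [h, zero_mul, (sum_eq_zero_iff_of_nonneg fun y _ => hw y).1 h y (mem_univ y)]
  · exact mul_div_cancel₀ _ h

lemma isDist_condDist (hw : ∀ y, 0 ≤ w x y) {ν : β → ℝ} (hν : IsDist ν) :
    IsDist (condDist w ν x) := by
  by_cases h : ∑ y', w x y' = 0
  · rwa [show condDist w ν x = ν from funext fun y => if_pos h]
  · rw [show condDist w ν x = fun y => w x y / ∑ y', w x y' from funext fun y => if_neg h]
    exact ⟨fun y => div_nonneg (hw y) (sum_nonneg fun y _ => hw y), by rw [← sum_div, div_self h]⟩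

end ConditionalDistribution

lemma mul_prod_mul_div_sub_one {ι : Type*} {m : ℝ} (a : ι → ℝ) (S : Finset ι) :
    m * ∏ i ∈ S, ((1 + a i) * m / m - 1) = m * ∏ i ∈ S, a i := by
  rcases eq_or_ne m 0 with rfl | hm
  · simp
  · simp only [mul_div_cancel_right₀ _ hm, add_sub_cancel_left]

section Coupling

variable {ι β : Type*} [Fintype ι] [DecidableEq ι] (ν : β → ℝ) (e : β → ι → ℝ)

/-- The joint weight of `(x, y)`: draw `y ∼ ν`, then `x` from the sign distribution with
means `e y`. -/
def coupling (x : ι → ℝ) (y : β) : ℝ :=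
  ν y * signWeight (e y) x

variable {ν e}

lemma coupling_nonneg (hν : ∀ y, 0 ≤ ν y) (he : ∀ y i, |e y i| ≤ 1) {x : ι → ℝ}
    (hx : x ∈ signCube ι) (y : β) : 0 ≤ coupling ν e x y :=
  mul_nonneg (hν y) (signWeight_nonneg (he y) hx)

lemma sum_signCube_prod_mul_coupling (S : Finset ι) (y : β) :
    ∑ x ∈ signCube ι, (∏ i ∈ S, x i) * coupling ν e x y = ν y * ∏ i ∈ S, e y i := by
  simp only [coupling, mul_left_comm _ (ν y), ← mul_sum, sum_signCube_prod_mul_signWeight]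

variable [Fintype β]

variable (ν e) in
def cubeMarginal (x : ι → ℝ) : ℝ :=
  ∑ y, coupling ν e x y

lemma sum_signCube_prod_mul_cubeMarginal (S : Finset ι) :
    ∑ x ∈ signCube ι, (∏ i ∈ S, x i) * cubeMarginal ν e x = ∑ y, ν y * ∏ i ∈ S, e y i := by
  simp only [cubeMarginal, mul_sum]
  rw [sum_comm]
  exact sum_congr rfl fun y _ => sum_signCube_prod_mul_coupling S y

lemma isDist_cubeMarginal (hν : IsDist ν) (he : ∀ y i, |e y i| ≤ 1) :
    IsDist fun x : signCube ι => cubeMarginal ν e x := by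
  refine ⟨fun x => sum_nonneg fun y _ => coupling_nonneg hν.1 he x.2 y, ?_⟩
  rw [sum_coe_sort (signCube ι) (cubeMarginal ν e), ← hν.2]
  simpa using sum_signCube_prod_mul_cubeMarginal (ν := ν) (e := e) ∅

lemma sum_ite_cubeMarginal (i : ι) :
    ∑ x : signCube ι, (if x.1 i = 1 then cubeMarginal ν e x else 0)
      = (∑ y, ν y + ∑ y, ν y * e y i) / 2 := by
  have hhalf : ∀ x ∈ signCube ι, (if x i = 1 then cubeMarginal ν e x else 0)
      = ((∏ j ∈ ∅, x j) * cubeMarginal ν e x + (∏ j ∈ {i}, x j) * cubeMarginal ν e x) / 2 := by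
    intro x hx
    rcases mem_signCube.1 hx i with h | h <;> norm_num [h]
  rw [sum_coe_sort (signCube ι) fun x => if x i = 1 then cubeMarginal ν e x else 0,
    sum_congr rfl hhalf, ← sum_div, sum_add_distrib, sum_signCube_prod_mul_cubeMarginal,
    sum_signCube_prod_mul_cubeMarginal]
  simp

lemma sum_cubeMarginal_mul_condDist (hν : ∀ y, 0 ≤ ν y) (he : ∀ y i, |e y i| ≤ 1)
    (ρ : ℝ) (i : ι) (y : β) :
    ∑ x : signCube ι, (1 + ρ * x.1 i) * cubeMarginal ν e x * condDist (coupling ν e) ν x y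
      = ν y * (1 + ρ * e y i) := by
  have hcond : ∀ x : signCube ι, (1 + ρ * x.1 i) * cubeMarginal ν e x
      * condDist (coupling ν e) ν x y = (1 + ρ * x.1 i) * coupling ν e x y := fun x => by
    rw [mul_assoc, cubeMarginal, sum_mul_condDist (coupling_nonneg hν he x.2)]
  have hsplit : ∀ x : ι → ℝ, (1 + ρ * x i) * coupling ν e x y
      = (∏ j ∈ ∅, x j) * coupling ν e x y + ρ * ((∏ j ∈ {i}, x j) * coupling ν e x y) := by
    intro x
    simp only [prod_empty, prod_singleton]
    ring
  simp only [hcond]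
  rw [sum_coe_sort (signCube ι) fun x => (1 + ρ * x i) * coupling ν e x y]
  simp only [hsplit, sum_add_distrib, ← mul_sum, sum_signCube_prod_mul_coupling]
  simp only [prod_empty, prod_singleton]
  ring

lemma sum_cubeMarginal_mul_prod_ratio_sub_one (ρ : ℝ) (S : Finset ι) :
    ∑ x : signCube ι, cubeMarginal ν e x
        * ∏ i ∈ S, ((1 + ρ * x.1 i) * cubeMarginal ν e x / cubeMarginal ν e x - 1)
      = ∑ y, ν y * ∏ i ∈ S, (ρ * e y i) := by
  simp only [mul_prod_mul_div_sub_one, prod_mul_distrib, prod_const, mul_left_comm _ (ρ ^ _),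
    ← mul_sum]
  rw [sum_coe_sort (signCube ι) fun x => cubeMarginal ν e x * ∏ i ∈ S, x i]
  simp only [mul_comm (cubeMarginal ν e _), sum_signCube_prod_mul_cubeMarginal]

end Coupling

section Deviation

variable {ι β : Type*}

def deviation (ρ : ℝ) (η₀ : β → ℝ) (η : ι → β → ℝ) (y : β) (i : ι) : ℝ :=
  (η i y / η₀ y - 1) / ρ

variable {ρ : ℝ} {η₀ : β → ℝ} {η : ι → β → ℝ}

lemma abs_deviation_le_one (hρ : 0 < ρ) {y : β} {i : ι} (h : |η i y / η₀ y - 1| ≤ ρ) :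
    |deviation ρ η₀ η y i| ≤ 1 := by
  rwa [deviation, abs_div, abs_of_pos hρ, div_le_one hρ]

lemma mul_deviation (hρ : ρ ≠ 0) (y : β) (i : ι) :
    ρ * deviation ρ η₀ η y i = η i y / η₀ y - 1 :=
  mul_div_cancel₀ _ hρ

lemma mul_one_add_mul_deviation (hρ : ρ ≠ 0) {y : β} (hy : η₀ y ≠ 0) (i : ι) :
    η₀ y * (1 + ρ * deviation ρ η₀ η y i) = η i y := by
  rw [mul_deviation hρ, add_sub_cancel, mul_div_cancel₀ _ hy]

lemma sum_mul_deviation [Fintype β] (hpos : ∀ y, η₀ y ≠ 0) {i : ι}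
    (hsum : ∑ y, η i y = ∑ y, η₀ y) :
    ∑ y, η₀ y * deviation ρ η₀ η y i = 0 := by
  have h : ∀ y, η₀ y * deviation ρ η₀ η y i = (η i y - η₀ y) / ρ := fun y => by
    rw [deviation, mul_div_assoc', mul_sub, mul_div_cancel₀ _ (hpos y), mul_one]
  simp only [h, ← sum_div, sum_sub_distrib, hsum, sub_self, zero_div]

end Deviation

theorem statement12 (k : ℕ) (ρ : ℝ) (hρ0 : 0 < ρ)
    (Ωη : Type) [Fintype Ωη] (η₀ : Ωη → ℝ) (η : Fin k → Ωη → ℝ)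
    (hη₀ : IsDist η₀) (hη : ∀ i, IsDist (η i)) (hpos : ∀ y, 0 < η₀ y)
    (hclose : ∀ i y, |η i y / η₀ y - 1| ≤ ρ) :
    ∃ (Ωμ : Finset (Fin k → ℝ)) (μ₀ : ↥Ωμ → ℝ) (μ : Fin k → ↥Ωμ → ℝ)
      (Q : ↥Ωμ → Ωη → ℝ),
      (∀ x ∈ Ωμ, ∀ i, x i = 1 ∨ x i = -1) ∧
      IsDist μ₀ ∧
      (∀ i : Fin k, ∑ x : ↥Ωμ, (if x.1 i = 1 then μ₀ x else 0) = 1/2) ∧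
      (∀ i x, μ i x = (1 + ρ * x.1 i) * μ₀ x) ∧
      (∀ x, (∀ y, 0 ≤ Q x y) ∧ ∑ y, Q x y = 1) ∧
      (∀ i y, η i y = ∑ x : ↥Ωμ, μ i x * Q x y) ∧
      (∀ S : Finset (Fin k),
        (∑ x : ↥Ωμ, μ₀ x * ∏ i ∈ S, (μ i x / μ₀ x - 1))
          = ∑ y, η₀ y * ∏ i ∈ S, (η i y / η₀ y - 1)) := by
  set ε := deviation ρ η₀ η
  have hρ : ρ ≠ 0 := hρ0.ne'
  have hη₀ne : ∀ y, η₀ y ≠ 0 := fun y => (hpos y).ne'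
  have hε : ∀ y i, |ε y i| ≤ 1 := fun y i => abs_deviation_le_one hρ0 (hclose i y)
  refine ⟨signCube (Fin k), fun x => cubeMarginal η₀ ε x,
    fun i x => (1 + ρ * x.1 i) * cubeMarginal η₀ ε x,
    fun x => condDist (coupling η₀ ε) η₀ x, fun x => mem_signCube.1,
    isDist_cubeMarginal hη₀ hε, fun i => ?_, fun _ _ => rfl,
    fun x => isDist_condDist (coupling_nonneg hη₀.1 hε x.2) hη₀, fun i y => ?_, fun S => ?_⟩
  · rw [sum_ite_cubeMarginal, hη₀.2,
      sum_mul_deviation hη₀ne (((hη i).2).trans hη₀.2.symm), add_zero]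
  · rw [sum_cubeMarginal_mul_condDist hη₀.1 hε, mul_one_add_mul_deviation hρ (hη₀ne y)]
  · rw [sum_cubeMarginal_mul_prod_ratio_sub_one]
    simp only [ε, mul_deviation hρ]
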